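/- arXiv:1707.02437 — 2 statements merged into one kernel-verified Lean document; each statement's English description precedes it below -/
import Mathlib

section
/- The expected loss is monotone nondecreasing in the infection coefficient: if 0 < β₁ ≤ β₂, then componentwise C^{(β₁)}(t) ≤ C^{(β₂)}(t) on [0,T] for solutions of the SCS model with the same initial condition in [0,1]^N, and consequently L(x; G, α, β₁, δ, γ, T) ≤ L(x; G, α, β₂, δ, γ, T). -/
/-!
Both solutions stay in the box `[0, 1]^N`, and there the SCS vector field is cooperative
(`∂f_i/∂C_j = β a_{ji} (1 - C_i) / (δ w_i) ≥ 0` for `j ≠ i`) and nondecreasing in `β`. Hence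
when a component of `C₂ - C₁` first reaches a small negative level `-e` while the others are
`≥ -e`, its derivative is at least `-K e`. Adding `ε e^{L t}` with `L > K` turns this into a
strict first-touching argument, and `ε → 0` gives `C₁ ≤ C₂`. The same argument with `C` and
`1 - C` in place of `C₂ - C₁` proves the invariance of the box. The loss inequality follows by
integrating against the positive weights `w`.
-/

/-- The right-hand side of the SCS model. -/
noncomputable def scsF {N : ℕ} (a : Fin N → Fin N → ℝ) (w x : Fin N → ℝ) (α β δ γ : ℝ)
    (C : Fin N → ℝ) : Fin N → ℝ :=
  fun i => (1 / (δ * w i)) * (α * x i + β * ∑ j, a j i * C j) * (1 - C i) - γ * w i * C i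

open Set Filter Topology

theorem HasDerivAt.eventually_nhdsLT_lt {f : ℝ → ℝ} {f' x : ℝ} (hf : HasDerivAt f f' x)
    (hf' : 0 < f') : ∀ᶠ t in 𝓝[<] x, f t < f x := by
  have hslope := (hasDerivAt_iff_tendsto_slope.mp hf).eventually (eventually_gt_nhds hf')
  filter_upwards [nhdsLT_le_nhdsNE x hslope, self_mem_nhdsWithin] with t hpos (ht : t < x)
  exact (slope_pos_iff_gt ht).mp hpos

theorem pos_of_hasDerivAt_of_pos_at_boundary {ι : Type*} [Finite ι] {g g' : ℝ → ι → ℝ} {T : ℝ}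
    (hg : ∀ t ∈ Icc 0 T, ∀ i, HasDerivAt (fun s => g s i) (g' t i) t)
    (h0 : ∀ i, 0 < g 0 i)
    (hbd : ∀ t ∈ Icc 0 T, (∀ j, 0 ≤ g t j) → ∀ i, g t i = 0 → 0 < g' t i) :
    ∀ t ∈ Icc 0 T, ∀ i, 0 < g t i := by
  by_contra! ⟨t₁, ht₁, i₁, hi₁⟩
  set S := ⋃ i, {t ∈ Icc 0 T | g t i ≤ 0}
  have hS : IsCompact S := isCompact_iUnion fun i =>
    isCompact_Icc.of_isClosed_subset
      (ContinuousOn.preimage_isClosed_of_isClosed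
        (fun t ht => (hg t ht i).continuousAt.continuousWithinAt) isClosed_Icc isClosed_Iic)
      inter_subset_left
  obtain ⟨t₀, ht₀S, ht₀min⟩ := hS.exists_isLeast ⟨t₁, mem_iUnion.2 ⟨i₁, ht₁, hi₁⟩⟩
  obtain ⟨i, ht₀, hi⟩ := mem_iUnion.1 ht₀S
  have hbefore : ∀ t ∈ Ico 0 t₀, ∀ j, 0 < g t j := fun t ht j => by
    by_contra! h
    exact ht.2.not_ge (ht₀min (mem_iUnion.2 ⟨j, ⟨ht.1, ht.2.le.trans ht₀.2⟩, h⟩))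
  have ht₀pos : 0 < t₀ := ht₀.1.lt_of_ne fun h => (h0 i).not_ge (h ▸ hi)
  have hnear : ∀ᶠ t in 𝓝[<] t₀, ∀ j, 0 < g t j := by
    filter_upwards [Ioo_mem_nhdsLT ht₀pos] with t ht using hbefore t (Ioo_subset_Ico_self ht)
  have hnonneg : ∀ j, 0 ≤ g t₀ j := fun j =>
    ge_of_tendsto ((hg t₀ ht₀ j).continuousAt.tendsto.mono_left nhdsWithin_le_nhds)
      (hnear.mono fun t ht => (ht j).le)
  have hzero : g t₀ i = 0 := le_antisymm hi (hnonneg i)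
  obtain ⟨t, hlt, hpos⟩ :=
    (((hg t₀ ht₀ i).eventually_nhdsLT_lt (hbd t₀ ht₀ hnonneg i hzero)).and hnear).exists
  exact (hpos i).not_gt (hzero ▸ hlt)

theorem nonneg_of_hasDerivAt_of_boundary_ge {ι : Type*} [Finite ι] {g g' : ℝ → ι → ℝ}
    {K : ι → ℝ} {T e₀ : ℝ} (he₀ : 0 < e₀)
    (hg : ∀ t ∈ Icc 0 T, ∀ i, HasDerivAt (fun s => g s i) (g' t i) t)
    (h0 : ∀ i, 0 ≤ g 0 i)
    (hbd : ∀ t ∈ Icc 0 T, ∀ e, 0 < e → e ≤ e₀ → (∀ j, -e ≤ g t j) →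
      ∀ i, g t i = -e → -(K i * e) ≤ g' t i) :
    ∀ t ∈ Icc 0 T, ∀ i, 0 ≤ g t i := by
  obtain ⟨K₀, hK₀⟩ := Finite.exists_le K
  set L := |K₀| + 1
  have hL : K₀ < L := (le_abs_self K₀).trans_lt (lt_add_one _)
  have hL0 : 0 < L := by positivity
  -- the exponent is shifted by `T` so that the perturbation stays below `ε` on `[0, T]`
  have hpert : ∀ ε ∈ Ioc 0 e₀, ∀ t ∈ Icc 0 T, ∀ i, 0 < g t i + ε * Real.exp (L * (t - T)) := by
    intro ε hε
    refine pos_of_hasDerivAt_of_pos_at_boundary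
      (g' := fun t i => g' t i + L * (ε * Real.exp (L * (t - T)))) (fun t ht i => ?_)
      (fun i => add_pos_of_nonneg_of_pos (h0 i) (by have := hε.1; positivity)) ?_
    · exact (hg t ht i).add ((((hasDerivAt_id t).sub_const T).const_mul L).exp.const_mul ε
        |>.congr_deriv (by simp only [id, mul_one]; ring))
    · intro t ht hall i hi
      set e := ε * Real.exp (L * (t - T))
      have he : 0 < e := by have := hε.1; positivity
      have hee₀ : e ≤ e₀ :=
        (mul_le_of_le_one_right hε.1.le (Real.exp_le_one_iff.2 (by nlinarith [ht.2]))).trans hε.2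
      have := hbd t ht e he hee₀ (fun j => by linarith [hall j]) i (by linarith)
      nlinarith [hK₀ i]
  intro t ht i
  have hlim : Tendsto (fun ε => g t i + ε * Real.exp (L * (t - T))) (𝓝[>] 0) (𝓝 (g t i)) := by
    have : Continuous (fun ε => g t i + ε * Real.exp (L * (t - T))) := by fun_prop
    simpa using (this.tendsto 0).mono_left nhdsWithin_le_nhds
  refine ge_of_tendsto hlim ?_
  filter_upwards [Ioc_mem_nhdsGT he₀] with ε hε using (hpert ε hε t ht i).le

theorem intervalIntegral_sum_mul_mono {ι : Type*} [Fintype ι] {w : ι → ℝ} {f g : ℝ → ι → ℝ}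
    {a b : ℝ} (hab : a ≤ b) (hw : ∀ i, 0 ≤ w i) (hf : ContinuousOn f (Icc a b))
    (hg : ContinuousOn g (Icc a b)) (hfg : ∀ t ∈ Icc a b, ∀ i, f t i ≤ g t i) :
    ∫ t in a..b, ∑ i, w i * f t i ≤ ∫ t in a..b, ∑ i, w i * g t i := by
  have hint : ∀ h : ℝ → ι → ℝ, ContinuousOn h (Icc a b) →
      IntervalIntegrable (fun t => ∑ i, w i * h t i) MeasureTheory.volume a b := fun h hh =>
    ContinuousOn.intervalIntegrable (by rw [uIcc_of_le hab]; fun_prop)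
  refine intervalIntegral.integral_mono_on hab (hint f hf) (hint g hg) fun t ht => ?_
  gcongr with i
  exacts [hw i, hfg t ht i]

theorem neg_card_mul_le_sum_mul {ι : Type*} [Fintype ι] {a C : ι → ℝ} {e : ℝ}
    (ha0 : ∀ j, 0 ≤ a j) (ha1 : ∀ j, a j ≤ 1) (he : 0 ≤ e) (hC : ∀ j, -e ≤ C j) :
    -(Fintype.card ι * e) ≤ ∑ j, a j * C j :=
  calc -(Fintype.card ι * e) = ∑ _j : ι, -e := by simp
    _ ≤ ∑ j, a j * C j := Finset.sum_le_sum fun j _ => by nlinarith [ha0 j, ha1 j, hC j]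

section SCS

variable {N : ℕ} {a : Fin N → Fin N → ℝ} {w x : Fin N → ℝ} {α δ γ : ℝ}

theorem neg_le_scsF_of_eq_neg {β e : ℝ} {C : Fin N → ℝ} {i : Fin N}
    (hα : 0 ≤ α) (hβ : 0 ≤ β) (hγ : 0 ≤ γ) (hδ : 0 < δ) (hw : 0 < w i) (hx : 0 ≤ x i)
    (ha0 : ∀ j, 0 ≤ a j i) (ha1 : ∀ j, a j i ≤ 1) (he : 0 ≤ e) (he1 : e ≤ 1)
    (hC : ∀ j, -e ≤ C j) (hi : C i = -e) :
    -(2 * β * N / (δ * w i) * e) ≤ scsF a w x α β δ γ C i := by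
  have hS := neg_card_mul_le_sum_mul ha0 ha1 he hC
  rw [Fintype.card_fin] at hS
  have hB : -(β * N * e) ≤ α * x i + β * ∑ j, a j i * C j := by
    nlinarith [mul_nonneg hα hx, mul_le_mul_of_nonneg_left hS hβ]
  have hBe : 1 / (δ * w i) * -(β * N * e) * (1 + e) ≤
      1 / (δ * w i) * (α * x i + β * ∑ j, a j i * C j) * (1 + e) := by
    gcongr
  have hKe : -(2 * β * N / (δ * w i) * e) ≤ 1 / (δ * w i) * -(β * N * e) * (1 + e) := by
    rw [show 2 * β * N / (δ * w i) = 1 / (δ * w i) * (β * N) * 2 by ring]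
    have : 0 ≤ 1 / (δ * w i) * (β * N) * e := by positivity
    nlinarith
  unfold scsF
  rw [hi]
  nlinarith [mul_nonneg (mul_nonneg hγ hw.le) he]

theorem scsF_nonpos_of_one_le {β : ℝ} {C : Fin N → ℝ} {i : Fin N}
    (hα : 0 ≤ α) (hβ : 0 ≤ β) (hγ : 0 ≤ γ) (hδ : 0 < δ) (hw : 0 < w i) (hx : 0 ≤ x i)
    (ha0 : ∀ j, 0 ≤ a j i) (hC : ∀ j, 0 ≤ C j) (hi : 1 ≤ C i) :
    scsF a w x α β δ γ C i ≤ 0 := by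
  have hS : 0 ≤ ∑ j, a j i * C j := Finset.sum_nonneg fun j _ => mul_nonneg (ha0 j) (hC j)
  have hB : 0 ≤ α * x i + β * ∑ j, a j i * C j := by positivity
  have hP : 0 < 1 / (δ * w i) := by positivity
  unfold scsF
  nlinarith [mul_nonneg (mul_nonneg hP.le hB) (sub_nonneg.2 hi),
    mul_nonneg (mul_nonneg hγ hw.le) (hC i)]

theorem neg_le_scsF_sub_scsF {β₁ β₂ e : ℝ} {C₁ C₂ : Fin N → ℝ} {i : Fin N}
    (hα : 0 ≤ α) (hβ₁ : 0 ≤ β₁) (hβ : β₁ ≤ β₂) (hγ : 0 ≤ γ) (hδ : 0 < δ) (hw : 0 < w i)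
    (hx : 0 ≤ x i) (ha0 : ∀ j, 0 ≤ a j i) (ha1 : ∀ j, a j i ≤ 1) (he : 0 ≤ e)
    (hC₁ : ∀ j, 0 ≤ C₁ j) (hC₂ : ∀ j, 0 ≤ C₂ j) (hC₂i : C₂ i ≤ 1)
    (hC : ∀ j, -e ≤ C₂ j - C₁ j) (hi : C₂ i - C₁ i = -e) :
    -(β₁ * N / (δ * w i) * e) ≤ scsF a w x α β₂ δ γ C₂ i - scsF a w x α β₁ δ γ C₁ i := by
  set P := 1 / (δ * w i)
  set S₁ := ∑ j, a j i * C₁ j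
  set S₂ := ∑ j, a j i * C₂ j
  have hP : 0 < P := by positivity
  have hS₁ : 0 ≤ S₁ := Finset.sum_nonneg fun j _ => mul_nonneg (ha0 j) (hC₁ j)
  have hS₂ : 0 ≤ S₂ := Finset.sum_nonneg fun j _ => mul_nonneg (ha0 j) (hC₂ j)
  have hS : -(N * e) ≤ S₂ - S₁ := by
    simpa [S₁, S₂, ← Finset.sum_sub_distrib, ← mul_sub] using
      neg_card_mul_le_sum_mul ha0 ha1 he hC
  have hdiff : scsF a w x α β₂ δ γ C₂ i - scsF a w x α β₁ δ γ C₁ i =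
      P * ((β₂ - β₁) * S₂ * (1 - C₂ i) + β₁ * (S₂ - S₁) * (1 - C₂ i)
        + (α * x i + β₁ * S₁) * e) + γ * w i * e := by
    simp only [scsF, P, S₁, S₂]
    rw [show C₁ i = C₂ i + e by linarith]
    ring
  have hcoupling : -(β₁ * N * e) ≤ β₁ * (S₂ - S₁) * (1 - C₂ i) := by
    nlinarith [mul_nonneg (mul_nonneg hβ₁ (by linarith : 0 ≤ S₂ - S₁ + N * e))
        (sub_nonneg.2 hC₂i),
      mul_nonneg (mul_nonneg hβ₁ (mul_nonneg (Nat.cast_nonneg N) he)) (hC₂ i)]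
  have hmonotone : 0 ≤ (β₂ - β₁) * S₂ * (1 - C₂ i) := by
    have := sub_nonneg.2 hβ; have := sub_nonneg.2 hC₂i; positivity
  have hrest : 0 ≤ (α * x i + β₁ * S₁) * e := by positivity
  rw [hdiff, show β₁ * N / (δ * w i) * e = P * (β₁ * N * e) by ring]
  nlinarith [mul_nonneg (mul_nonneg hγ hw.le) he]

theorem scs_nonneg {β T : ℝ} {C : ℝ → Fin N → ℝ}
    (hα : 0 ≤ α) (hβ : 0 ≤ β) (hγ : 0 ≤ γ) (hδ : 0 < δ) (hw : ∀ i, 0 < w i)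
    (hx : ∀ i, 0 ≤ x i) (ha0 : ∀ i j, 0 ≤ a i j) (ha1 : ∀ i j, a i j ≤ 1)
    (hC : ∀ t ∈ Icc 0 T, HasDerivAt C (scsF a w x α β δ γ (C t)) t) (h0 : ∀ i, 0 ≤ C 0 i) :
    ∀ t ∈ Icc 0 T, ∀ i, 0 ≤ C t i :=
  nonneg_of_hasDerivAt_of_boundary_ge one_pos (fun t ht => hasDerivAt_pi.1 (hC t ht)) h0
    fun _ _ _ he he1 hCe i hi => neg_le_scsF_of_eq_neg hα hβ hγ hδ (hw i) (hx i)
      (fun j => ha0 j i) (fun j => ha1 j i) he.le he1 hCe hi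

theorem scs_le_one {β T : ℝ} {C : ℝ → Fin N → ℝ}
    (hα : 0 ≤ α) (hβ : 0 ≤ β) (hγ : 0 ≤ γ) (hδ : 0 < δ) (hw : ∀ i, 0 < w i)
    (hx : ∀ i, 0 ≤ x i) (ha0 : ∀ i j, 0 ≤ a i j)
    (hC : ∀ t ∈ Icc 0 T, HasDerivAt C (scsF a w x α β δ γ (C t)) t)
    (hC0 : ∀ t ∈ Icc 0 T, ∀ i, 0 ≤ C t i) (h0 : ∀ i, C 0 i ≤ 1) :
    ∀ t ∈ Icc 0 T, ∀ i, C t i ≤ 1 := by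
  have := nonneg_of_hasDerivAt_of_boundary_ge (g := fun t i => 1 - C t i) (K := 0) one_pos
    (fun t ht i => (hasDerivAt_pi.1 (hC t ht) i).const_sub 1) (fun i => sub_nonneg.2 (h0 i))
    fun t ht e _ _ _ i hi => by
      have := scsF_nonpos_of_one_le hα hβ hγ hδ (hw i) (hx i) (fun j => ha0 j i) (hC0 t ht)
        (by linarith : 1 ≤ C t i)
      simpa using this
  exact fun t ht i => sub_nonneg.1 (this t ht i)

theorem scs_mem_Icc {β T : ℝ} {C : ℝ → Fin N → ℝ}
    (hα : 0 ≤ α) (hβ : 0 ≤ β) (hγ : 0 ≤ γ) (hδ : 0 < δ) (hw : ∀ i, 0 < w i)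
    (hx : ∀ i, 0 ≤ x i) (ha0 : ∀ i j, 0 ≤ a i j) (ha1 : ∀ i j, a i j ≤ 1)
    (hC : ∀ t ∈ Icc 0 T, HasDerivAt C (scsF a w x α β δ γ (C t)) t)
    (h0 : ∀ i, C 0 i ∈ Icc 0 1) :
    ∀ t ∈ Icc 0 T, ∀ i, C t i ∈ Icc 0 1 := by
  have hC0 := scs_nonneg hα hβ hγ hδ hw hx ha0 ha1 hC fun i => (h0 i).1
  exact fun t ht i =>
    ⟨hC0 t ht i, scs_le_one hα hβ hγ hδ hw hx ha0 hC hC0 (fun i => (h0 i).2) t ht i⟩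

theorem scs_le_of_infection_le {β₁ β₂ T : ℝ} {C₁ C₂ : ℝ → Fin N → ℝ}
    (hα : 0 ≤ α) (hβ₁ : 0 ≤ β₁) (hβ : β₁ ≤ β₂) (hγ : 0 ≤ γ) (hδ : 0 < δ) (hw : ∀ i, 0 < w i)
    (hx : ∀ i, 0 ≤ x i) (ha0 : ∀ i j, 0 ≤ a i j) (ha1 : ∀ i j, a i j ≤ 1)
    (hC₁ : ∀ t ∈ Icc 0 T, HasDerivAt C₁ (scsF a w x α β₁ δ γ (C₁ t)) t)
    (hC₂ : ∀ t ∈ Icc 0 T, HasDerivAt C₂ (scsF a w x α β₂ δ γ (C₂ t)) t)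
    (h0 : C₁ 0 = C₂ 0) (h0box : ∀ i, C₁ 0 i ∈ Icc 0 1) :
    ∀ t ∈ Icc 0 T, ∀ i, C₁ t i ≤ C₂ t i := by
  have hbox₁ := scs_mem_Icc hα hβ₁ hγ hδ hw hx ha0 ha1 hC₁ h0box
  have hbox₂ := scs_mem_Icc hα (hβ₁.trans hβ) hγ hδ hw hx ha0 ha1 hC₂ (h0 ▸ h0box)
  have := nonneg_of_hasDerivAt_of_boundary_ge (g := fun t i => C₂ t i - C₁ t i) one_pos
    (fun t ht i => (hasDerivAt_pi.1 (hC₂ t ht) i).sub (hasDerivAt_pi.1 (hC₁ t ht) i))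
    (fun i => by simp [h0])
    fun t ht _ he _ hCe i hi => neg_le_scsF_sub_scsF hα hβ₁ hβ hγ hδ (hw i) (hx i)
      (fun j => ha0 j i) (fun j => ha1 j i) he.le (fun j => (hbox₁ t ht j).1)
      (fun j => (hbox₂ t ht j).1) (hbox₂ t ht i).2 hCe hi
  exact fun t ht i => sub_nonneg.1 (this t ht i)

end SCS

/-- The expected loss is monotone nondecreasing in the infection coefficient:
if 0 < β₁ ≤ β₂ then componentwise C^{(β₁)} ≤ C^{(β₂)} on [0,T], and consequently
L(x; G, α, β₁, δ, γ, T) ≤ L(x; G, α, β₂, δ, γ, T). -/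
theorem loss_monotone_in_infection_coeff {N : ℕ} (a : Fin N → Fin N → ℝ)
    (ha : ∀ i j, a i j = 0 ∨ a i j = 1)
    (w x : Fin N → ℝ) (α β₁ β₂ δ γ T : ℝ)
    (hα : 0 < α) (hβ₁ : 0 < β₁) (hβ : β₁ ≤ β₂) (hδ : 0 < δ) (hγ : 0 < γ)
    (hx : ∀ i, 0 ≤ x i) (hw : ∀ i, 0 < w i) (hT : 0 < T)
    (C1 C2 : ℝ → Fin N → ℝ)
    (hC1 : ∀ t ∈ Set.Icc (0 : ℝ) T, HasDerivAt C1 (scsF a w x α β₁ δ γ (C1 t)) t)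
    (hC2 : ∀ t ∈ Set.Icc (0 : ℝ) T, HasDerivAt C2 (scsF a w x α β₂ δ γ (C2 t)) t)
    (h0 : C1 0 = C2 0) (h0box : ∀ i, C1 0 i ∈ Set.Icc (0 : ℝ) 1) :
    (∀ t ∈ Set.Icc (0 : ℝ) T, ∀ i, C1 t i ≤ C2 t i) ∧
    (∫ t in (0:ℝ)..T, ∑ i, w i * C1 t i) ≤ ∫ t in (0:ℝ)..T, ∑ i, w i * C2 t i := by
  have ha0 : ∀ i j, 0 ≤ a i j := fun i j => by rcases ha i j with h | h <;> simp [h]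
  have ha1 : ∀ i j, a i j ≤ 1 := fun i j => by rcases ha i j with h | h <;> simp [h]
  have hle := scs_le_of_infection_le hα.le hβ₁.le hβ hγ.le hδ hw hx ha0 ha1 hC1 hC2 h0 h0box
  have hcont : ∀ {β : ℝ} {C : ℝ → Fin N → ℝ},
      (∀ t ∈ Icc 0 T, HasDerivAt C (scsF a w x α β δ γ (C t)) t) → ContinuousOn C (Icc 0 T) :=
    fun hC t ht => (hC t ht).continuousAt.continuousWithinAt
  exact ⟨hle, intervalIntegral_sum_mul_mono hT.le (fun i => (hw i).le) (hcont hC1) (hcont hC2)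
    hle⟩
end

section
/- The expected loss is monotone nonincreasing in the response coefficient: if 0 < γ₁ ≤ γ₂, then componentwise C^{(γ₂)}(t) ≤ C^{(γ₁)}(t) on [0,T] for solutions of the SCS model with the same initial condition in [0,1]^N (with C_i ≥ 0), and consequently L(x; G, α, β, δ, γ₂, T) ≤ L(x; G, α, β, δ, γ₁, T). -/
open Set Filter Topology Finset

theorem eventually_sup'_lt_add_mul {ι : Type*} [Fintype ι] (hne : (univ : Finset ι).Nonempty)
    {g : ι → ℝ → ℝ} {g' : ι → ℝ} {x r : ℝ} (hg : ∀ i, HasDerivAt (g i) (g' i) x)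
    (hr : ∀ i, g i x = univ.sup' hne (g · x) → g' i < r) :
    ∀ᶠ z in 𝓝[>] x, univ.sup' hne (g · z) < univ.sup' hne (g · x) + r * (z - x) := by
  set F := fun z => univ.sup' hne (g · z)
  have hlt : ∀ i, ∀ᶠ z in 𝓝[>] x, g i z < F x + r * (z - x) := by
    intro i
    rcases (le_sup' (g · x) (mem_univ i)).eq_or_lt with hmax | hlt
    · filter_upwards [(hg i).hasDerivWithinAt.limsup_slope_le' (lt_irrefl x) (hr i hmax),
        self_mem_nhdsWithin] with z hz (hxz : x < z)
      rw [slope_def_field, div_lt_iff₀ (sub_pos.2 hxz)] at hz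
      linarith
    · have hline : ContinuousAt (fun z => F x + r * (z - x)) x := by fun_prop
      exact ((hg i).continuousAt.eventually_lt hline (by simpa using hlt)).filter_mono
        nhdsWithin_le_nhds
  filter_upwards [eventually_all.2 hlt] with z hz
  exact (sup'_lt_iff hne).2 fun i _ => hz i

theorem sup'_nonpos_of_hasDerivAt_le_mul {ι : Type*} [Fintype ι]
    (hne : (univ : Finset ι).Nonempty) {g g' : ι → ℝ → ℝ} {K a b : ℝ}
    (hg : ∀ t ∈ Icc a b, ∀ i, HasDerivAt (g i) (g' i t) t)
    (hmax : ∀ t ∈ Ico a b, ∀ i, g i t = univ.sup' hne (g · t) → g' i t ≤ K * g i t)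
    (ha : univ.sup' hne (g · a) ≤ 0) :
    ∀ t ∈ Icc a b, univ.sup' hne (g · t) ≤ 0 := by
  set F := fun t => univ.sup' hne (g · t)
  have hcont : ContinuousOn F (Icc a b) := ContinuousOn.finset_sup'_apply hne fun i _ =>
    fun t ht => (hg t ht i).continuousAt.continuousWithinAt
  have hslope : ∀ t ∈ Ico a b, ∀ r, K * F t < r →
      ∃ᶠ z in 𝓝[>] t, (z - t)⁻¹ * (F z - F t) < r := by
    intro t ht r hr
    have hlt := eventually_sup'_lt_add_mul hne (hg t (Ico_subset_Icc_self ht)) fun i hi =>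
      (hmax t ht i hi).trans_lt (by rwa [hi])
    refine Eventually.frequently ?_
    filter_upwards [hlt, self_mem_nhdsWithin] with z hz (htz : t < z)
    rw [inv_mul_lt_iff₀ (sub_pos.2 htz)]
    linarith
  intro t ht
  simpa only [gronwallBound_ε0_δ0] using
    le_gronwallBound_of_liminf_deriv_right_le hcont hslope ha (fun t _ => (add_zero _).ge) t ht

theorem nonpos_of_hasDerivAt_le_mul_at_max {ι : Type*} [Fintype ι]
    {g g' : ι → ℝ → ℝ} {K : ι → ℝ} {a b : ℝ}
    (hg : ∀ t ∈ Icc a b, ∀ i, HasDerivAt (g i) (g' i t) t)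
    (hmax : ∀ t ∈ Ico a b, ∀ i, 0 ≤ g i t → (∀ j, g j t ≤ g i t) →
      g' i t ≤ K i * g i t)
    (ha : ∀ i, g i a ≤ 0) :
    ∀ t ∈ Icc a b, ∀ i, g i t ≤ 0 := by
  obtain ⟨K₀, hK₀⟩ := Finite.bddAbove_range K
  -- adjoining the zero function makes the maximum nonnegative
  set G : Option ι → ℝ → ℝ := fun p => p.elim (fun _ => 0) g
  have hG := sup'_nonpos_of_hasDerivAt_le_mul (a := a) (b := b) univ_nonempty (g := G)
    (g' := fun p => p.elim (fun _ => 0) g') (K := K₀) ?_ ?_ ?_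
  · exact fun t ht i => (le_sup' (G · t) (mem_univ (some i))).trans (hG t ht)
  · rintro t ht (_ | i)
    · exact hasDerivAt_const t 0
    · exact hg t ht i
  · rintro t ht (_ | i) hi
    · exact (mul_zero K₀).ge
    · have hnonneg : 0 ≤ g i t := (le_sup' (G · t) (mem_univ none)).trans_eq hi.symm
      have hle : ∀ j, g j t ≤ g i t := fun j =>
        (le_sup' (G · t) (mem_univ (some j))).trans_eq hi.symm
      exact (hmax t ht i hnonneg hle).trans
        (mul_le_mul_of_nonneg_right (hK₀ ⟨i, rfl⟩) hnonneg)
  · exact sup'_le _ _ fun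
      | none, _ => le_rfl
      | some i, _ => ha i

theorem sum_mul_le_card_mul {ι : Type*} [Fintype ι] {a u : ι → ℝ} {v : ℝ}
    (ha : ∀ j, a j ∈ Icc (0 : ℝ) 1) (hu : ∀ j, u j ≤ v) (hv : 0 ≤ v) :
    ∑ j, a j * u j ≤ Fintype.card ι * v := by
  have hle : ∀ j ∈ (univ : Finset ι), a j * u j ≤ v := fun j _ =>
    (mul_le_mul_of_nonneg_left (hu j) (ha j).1).trans (mul_le_of_le_one_left hv (ha j).2)
  simpa only [card_univ, nsmul_eq_mul] using sum_le_card_nsmul univ _ v hle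

section SCS

variable {N : ℕ} {a : Fin N → Fin N → ℝ} {w x : Fin N → ℝ} {α β δ : ℝ}

noncomputable def scsPressure (a : Fin N → Fin N → ℝ) (w x : Fin N → ℝ) (α β δ : ℝ)
    (C : Fin N → ℝ) (i : Fin N) : ℝ :=
  1 / (δ * w i) * (α * x i + β * ∑ j, a j i * C j)

theorem scsF_apply (γ : ℝ) (C : Fin N → ℝ) (i : Fin N) :
    scsF a w x α β δ γ C i = scsPressure a w x α β δ C i * (1 - C i) - γ * w i * C i :=
  rfl

theorem scsPressure_nonneg (ha : ∀ i j, 0 ≤ a i j) (hx : ∀ i, 0 ≤ x i) (hα : 0 ≤ α)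
    (hβ : 0 ≤ β) (hδ : 0 ≤ δ) (hw : ∀ i, 0 ≤ w i) {C : Fin N → ℝ}
    (hC : ∀ j, 0 ≤ C j) (i : Fin N) : 0 ≤ scsPressure a w x α β δ C i := by
  have hsum : 0 ≤ ∑ j, a j i * C j := sum_nonneg fun j _ => mul_nonneg (ha j i) (hC j)
  have := hw i
  have := hx i
  unfold scsPressure
  positivity

theorem scsPressure_sub_le (ha : ∀ i j, a i j ∈ Icc (0 : ℝ) 1) (hβ : 0 ≤ β)
    (hδ : 0 ≤ δ) (hw : ∀ i, 0 ≤ w i) {C C' : Fin N → ℝ} {v : ℝ} (hv : 0 ≤ v)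
    (hC : ∀ j, C' j - C j ≤ v) (i : Fin N) :
    scsPressure a w x α β δ C' i - scsPressure a w x α β δ C i ≤
      β / (δ * w i) * (N * v) := by
  have hsum : ∑ j, a j i * (C' j - C j) ≤ N * v := by
    simpa using sum_mul_le_card_mul (fun j => ha j i) hC hv
  have hcoef : 0 ≤ β / (δ * w i) := by have := hw i; positivity
  calc scsPressure a w x α β δ C' i - scsPressure a w x α β δ C i
      = β / (δ * w i) * ∑ j, a j i * (C' j - C j) := by
        simp only [scsPressure, mul_sub, sum_sub_distrib]
        ring
    _ ≤ β / (δ * w i) * (N * v) := mul_le_mul_of_nonneg_left hsum hcoef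

theorem neg_le_scsPressure (ha : ∀ i j, a i j ∈ Icc (0 : ℝ) 1) (hx : ∀ i, 0 ≤ x i)
    (hα : 0 ≤ α) (hβ : 0 ≤ β) (hδ : 0 ≤ δ) (hw : ∀ i, 0 ≤ w i) {C : Fin N → ℝ}
    {v : ℝ} (hv : 0 ≤ v) (hC : ∀ j, -v ≤ C j) (i : Fin N) :
    -(β / (δ * w i) * (N * v)) ≤ scsPressure a w x α β δ C i := by
  have h₀ := scsPressure_nonneg (fun i j => (ha i j).1) hx hα hβ hδ hw (C := 0)
    (fun _ => le_rfl) i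
  have hsub := scsPressure_sub_le (x := x) (α := α) (C := C) (C' := 0) ha hβ hδ hw hv
    (fun j => by simpa using neg_le.1 (hC j)) i
  linarith

variable {γ : ℝ} {C : ℝ → Fin N → ℝ} {t₀ T : ℝ}

theorem scs_solution_nonneg (ha : ∀ i j, a i j ∈ Icc (0 : ℝ) 1) (hx : ∀ i, 0 ≤ x i)
    (hα : 0 ≤ α) (hβ : 0 ≤ β) (hδ : 0 ≤ δ) (hw : ∀ i, 0 ≤ w i) (hγ : 0 ≤ γ)
    (hC : ∀ t ∈ Icc t₀ T, HasDerivAt C (scsF a w x α β δ γ (C t)) t)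
    (h₀ : ∀ i, 0 ≤ C t₀ i) :
    ∀ t ∈ Icc t₀ T, ∀ i, 0 ≤ C t i := by
  obtain ⟨M, hM⟩ := isCompact_Icc.exists_bound_of_continuousOn
    (fun t ht => (hC t ht).continuousAt.continuousWithinAt)
  -- the bound `M` turns the quadratic growth of `-C i` near its maximum into a linear one
  have key := nonpos_of_hasDerivAt_le_mul_at_max (g := fun i t => -C t i)
    (g' := fun i t => -scsF a w x α β δ γ (C t) i) (K := fun i => β / (δ * w i) * N * (1 + M))
    (fun t ht i => (hasDerivAt_pi.1 (hC t ht) i).neg) ?_ (fun i => neg_nonpos.2 (h₀ i))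
  · exact fun t ht i => neg_nonpos.1 (key t ht i)
  intro t ht i hv hmax
  have hP := neg_le_scsPressure (C := C t) ha hx hα hβ hδ hw hv (fun j => neg_le.1 (hmax j)) i
  have hvM : -C t i ≤ M := (neg_le_abs _).trans <|
    (norm_le_pi_norm (C t) i).trans (hM t (Ico_subset_Icc_self ht))
  have hk : 0 ≤ β / (δ * w i) * N := by have := hw i; positivity
  have hγw : 0 ≤ γ * w i := mul_nonneg hγ (hw i)
  simp only [scsF_apply]
  nlinarith [mul_nonneg hk (mul_nonneg hv (sub_nonneg.2 hvM)), mul_nonneg hγw hv]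

theorem scs_solution_le_one (ha : ∀ i j, 0 ≤ a i j) (hx : ∀ i, 0 ≤ x i)
    (hα : 0 ≤ α) (hβ : 0 ≤ β) (hδ : 0 ≤ δ) (hw : ∀ i, 0 ≤ w i) (hγ : 0 ≤ γ)
    (hC : ∀ t ∈ Icc t₀ T, HasDerivAt C (scsF a w x α β δ γ (C t)) t)
    (hC_nonneg : ∀ t ∈ Icc t₀ T, ∀ i, 0 ≤ C t i) (h₀ : ∀ i, C t₀ i ≤ 1) :
    ∀ t ∈ Icc t₀ T, ∀ i, C t i ≤ 1 := by
  have key := nonpos_of_hasDerivAt_le_mul_at_max (g := fun i t => C t i - 1)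
    (g' := fun i t => scsF a w x α β δ γ (C t) i) (K := 0)
    (fun t ht i => (hasDerivAt_pi.1 (hC t ht) i).sub_const 1) ?_
    (fun i => sub_nonpos.2 (h₀ i))
  · exact fun t ht i => sub_nonpos.1 (key t ht i)
  intro t ht i hv _
  have hCt := hC_nonneg t (Ico_subset_Icc_self ht)
  have hP := scsPressure_nonneg ha hx hα hβ hδ hw hCt i
  simp only [scsF_apply, Pi.zero_apply, zero_mul]
  nlinarith [mul_nonneg hP hv, mul_nonneg (mul_nonneg hγ (hw i)) (hCt i)]

theorem scs_solution_le_of_response_le (ha : ∀ i j, a i j ∈ Icc (0 : ℝ) 1) (hx : ∀ i, 0 ≤ x i)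
    (hα : 0 ≤ α) (hβ : 0 ≤ β) (hδ : 0 ≤ δ) (hw : ∀ i, 0 ≤ w i) {γ₁ γ₂ : ℝ}
    (hγ₁ : 0 ≤ γ₁) (hγ : γ₁ ≤ γ₂) {C₁ C₂ : ℝ → Fin N → ℝ}
    (hC₁ : ∀ t ∈ Icc t₀ T, HasDerivAt C₁ (scsF a w x α β δ γ₁ (C₁ t)) t)
    (hC₂ : ∀ t ∈ Icc t₀ T, HasDerivAt C₂ (scsF a w x α β δ γ₂ (C₂ t)) t)
    (hC₁_nonneg : ∀ t ∈ Icc t₀ T, ∀ i, 0 ≤ C₁ t i)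
    (hC₂_mem : ∀ t ∈ Icc t₀ T, ∀ i, C₂ t i ∈ Icc (0 : ℝ) 1)
    (h₀ : ∀ i, C₂ t₀ i ≤ C₁ t₀ i) :
    ∀ t ∈ Icc t₀ T, ∀ i, C₂ t i ≤ C₁ t i := by
  have key := nonpos_of_hasDerivAt_le_mul_at_max (g := fun i t => C₂ t i - C₁ t i)
    (g' := fun i t => scsF a w x α β δ γ₂ (C₂ t) i - scsF a w x α β δ γ₁ (C₁ t) i)
    (K := fun i => β / (δ * w i) * N)
    (fun t ht i => (hasDerivAt_pi.1 (hC₂ t ht) i).sub (hasDerivAt_pi.1 (hC₁ t ht) i)) ?_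
    (fun i => sub_nonpos.2 (h₀ i))
  · exact fun t ht i => sub_nonpos.1 (key t ht i)
  intro t ht i hv hmax
  have ht' := Ico_subset_Icc_self ht
  have hP₁ := scsPressure_nonneg (fun i j => (ha i j).1) hx hα hβ hδ hw (hC₁_nonneg t ht') i
  have hP := scsPressure_sub_le (x := x) (α := α) ha hβ hδ hw hv hmax i
  obtain ⟨hC₂i_nonneg, hC₂i_le⟩ := hC₂_mem t ht' i
  have hk : 0 ≤ β / (δ * w i) * N := by have := hw i; positivity
  simp only [scsF_apply]
  nlinarith [mul_nonneg (sub_nonneg.2 hP) (sub_nonneg.2 hC₂i_le),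
    mul_nonneg hk (mul_nonneg hv hC₂i_nonneg), mul_nonneg hP₁ hv,
    mul_nonneg (mul_nonneg (sub_nonneg.2 hγ) (hw i)) hC₂i_nonneg,
    mul_nonneg (mul_nonneg hγ₁ (hw i)) hv]

end SCS

/-- The expected loss is monotone nonincreasing in the response coefficient:
if 0 < γ₁ ≤ γ₂ then componentwise C^{(γ₂)} ≤ C^{(γ₁)} on [0,T], and consequently
L(x; G, α, β, δ, γ₂, T) ≤ L(x; G, α, β, δ, γ₁, T). -/
theorem loss_antitone_in_response_coeff {N : ℕ} (a : Fin N → Fin N → ℝ)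
    (ha : ∀ i j, a i j = 0 ∨ a i j = 1)
    (w x : Fin N → ℝ) (α β δ γ₁ γ₂ T : ℝ)
    (hα : 0 < α) (hβ : 0 < β) (hδ : 0 < δ) (hγ₁ : 0 < γ₁) (hγ : γ₁ ≤ γ₂)
    (hx : ∀ i, 0 ≤ x i) (hw : ∀ i, 0 < w i) (hT : 0 < T)
    (C1 C2 : ℝ → Fin N → ℝ)
    (hC1 : ∀ t ∈ Set.Icc (0 : ℝ) T, HasDerivAt C1 (scsF a w x α β δ γ₁ (C1 t)) t)
    (hC2 : ∀ t ∈ Set.Icc (0 : ℝ) T, HasDerivAt C2 (scsF a w x α β δ γ₂ (C2 t)) t)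
    (h0 : C1 0 = C2 0) (h0box : ∀ i, C1 0 i ∈ Set.Icc (0 : ℝ) 1) :
    (∀ t ∈ Set.Icc (0 : ℝ) T, ∀ i, C2 t i ≤ C1 t i) ∧
    (∫ t in (0:ℝ)..T, ∑ i, w i * C2 t i) ≤ ∫ t in (0:ℝ)..T, ∑ i, w i * C1 t i := by
  have ha' : ∀ i j, a i j ∈ Icc (0 : ℝ) 1 := fun i j => by
    rcases ha i j with h | h <;> simp [h]
  have hw' : ∀ i, 0 ≤ w i := fun i => (hw i).le
  have hC₁_nonneg := scs_solution_nonneg ha' hx hα.le hβ.le hδ.le hw' hγ₁.le hC1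
    fun i => (h0box i).1
  have hC₂_nonneg := scs_solution_nonneg ha' hx hα.le hβ.le hδ.le hw' (hγ₁.le.trans hγ) hC2
    fun i => h0 ▸ (h0box i).1
  have hC₂_le_one := scs_solution_le_one (fun i j => (ha' i j).1) hx hα.le hβ.le hδ.le hw'
    (hγ₁.le.trans hγ) hC2 hC₂_nonneg fun i => h0 ▸ (h0box i).2
  have hcomp := scs_solution_le_of_response_le ha' hx hα.le hβ.le hδ.le hw' hγ₁.le hγ hC1 hC2
    hC₁_nonneg (fun t ht i => ⟨hC₂_nonneg t ht i, hC₂_le_one t ht i⟩)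
    fun i => (congrFun h0 i).ge
  have hint : ∀ {γ : ℝ} {C : ℝ → Fin N → ℝ},
      (∀ t ∈ Icc (0 : ℝ) T, HasDerivAt C (scsF a w x α β δ γ (C t)) t) →
      IntervalIntegrable (fun t => ∑ i, w i * C t i) MeasureTheory.volume 0 T := fun hC =>
    ContinuousOn.intervalIntegrable_of_Icc hT.le <| continuousOn_finsetSum _ fun i _ =>
      continuousOn_const.mul fun t ht =>
        (hasDerivAt_pi.1 (hC t ht) i).continuousAt.continuousWithinAt
  exact ⟨hcomp, intervalIntegral.integral_mono_on hT.le (hint hC2) (hint hC1) fun t ht =>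
    sum_le_sum fun i _ => mul_le_mul_of_nonneg_left (hcomp t ht i) (hw' i)⟩
end
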